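/- arXiv:1712.00047 — 2 statements merged into one kernel-verified Lean document; each statement's English description precedes it below -/
import Mathlib

section
/- Let μ be a finite Borel measure on ℝ^d, let f_n : ℝ^d → ℝ be a sequence of functions converging pointwise to f : ℝ^d → ℝ, and assume inf_n f_n(0) > −∞. For a function g : ℝ^d → ℝ define F(g)(v) := sup_{x∈ℝ^d} (⟨v,x⟩ + g(x)), valued in (−∞, ∞]. Then liminf_{n→∞} ∫ F(f_n)(v) dμ(v) ≥ ∫ F(f)(v) dμ(v), where the integrals are understood in the extended reals (the integrands are bounded below by inf_n f_n(0)). -/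
/-!
Taking `x = 0` shows that every integrand is bounded below by `c = inf_n f_n(0)`. After shifting
by `c` the integrands become nonnegative, while the negative parts only contribute the finite
constant `|c| μ(ℝ^d)`, so the claim reduces to Fatou's lemma for the lower Lebesgue integral.
Fatou applies because `F(f)(v) ≤ liminf_n F(f_n)(v)` pointwise: each affine function
`⟨v, x⟩ + f(x)` in the supremum is the limit of `⟨v, x⟩ + f_n(x) ≤ F(f_n)(v)`.
-/

open Filter MeasureTheory

/-- The canonical map `EReal → ℝ≥0∞` sending `⊤ ↦ ⊤` and `x ↦ max x 0` otherwise. -/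
noncomputable def erealToENNReal (x : EReal) : ENNReal :=
  if x = ⊤ then ⊤ else ENNReal.ofReal x.toReal

/-- The integral of an `EReal`-valued function, as an extended real number: the difference of
the lower integrals of the positive and negative parts. -/
noncomputable def erealIntegral {X : Type*} [MeasurableSpace X]
    (μ : MeasureTheory.Measure X) (g : X → EReal) : EReal :=
  ((∫⁻ x, erealToENNReal (g x) ∂μ : ENNReal) : EReal)
    - ((∫⁻ x, erealToENNReal (-(g x)) ∂μ : ENNReal) : EReal)

open scoped ENNReal

theorem erealToENNReal_eq_toENNReal : erealToENNReal = EReal.toENNReal := rfl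

namespace EReal

theorem toENNReal_sub_add_toENNReal_neg {c : ℝ} (hc : c ≤ 0) {y : EReal}
    (hy : (c : EReal) ≤ y) :
    (y - c).toENNReal + (-y).toENNReal = y.toENNReal + ENNReal.ofReal (-c) := by
  induction y with
  | bot => simp at hy
  | top => simp
  | coe r =>
    have hcr : c ≤ r := mod_cast hy
    rw [← coe_sub, ← coe_neg, toENNReal_of_ne_top (coe_ne_top _),
      toENNReal_of_ne_top (coe_ne_top _), toENNReal_of_ne_top (coe_ne_top _), toReal_coe,
      toReal_coe, toReal_coe]
    rcases le_total r 0 with hr | hr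
    · rw [ENNReal.ofReal_eq_zero.mpr hr, zero_add,
        ← ENNReal.ofReal_add (by linarith) (by linarith)]
      ring_nf
    · rw [ENNReal.ofReal_eq_zero.mpr (by linarith : -r ≤ 0), add_zero,
        ← ENNReal.ofReal_add hr (by linarith)]
      ring_nf

theorem coe_ennreal_sub_eq_of_add_eq {a b g k : ℝ≥0∞} (hb : b ≠ ∞) (hk : k ≠ ∞)
    (h : g + b = a + k) : (a : EReal) - b = g - k := by
  rw [← coe_ennreal_toReal hb, ← coe_ennreal_toReal hk]
  rcases eq_or_ne a ∞ with rfl | ha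
  · have hg : g = ∞ := by simpa [hb] using h
    simp [hg]
  · have hg : g ≠ ∞ := by
      intro hg
      simp only [hg, top_add] at h
      exact ENNReal.add_ne_top.mpr ⟨ha, hk⟩ h.symm
    rw [← coe_ennreal_toReal ha, ← coe_ennreal_toReal hg, ← coe_sub, ← coe_sub]
    have := congrArg ENNReal.toReal h
    rw [ENNReal.toReal_add hg hb, ENNReal.toReal_add ha hk] at this
    exact_mod_cast (by linarith : a.toReal - b.toReal = g.toReal - k.toReal)

theorem liminf_sub_const_le (u : ℕ → EReal) (c : EReal) :
    liminf u atTop - c ≤ liminf (fun n => u n - c) atTop := by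
  have := le_liminf_add (u := u) (v := fun _ => -c) (f := atTop)
  rwa [liminf_const] at this

theorem toENNReal_liminf (u : ℕ → EReal) :
    (liminf u atTop).toENNReal = liminf (fun n => (u n).toENNReal) atTop :=
  Monotone.map_liminf_of_continuousAt (fun _ _ => toENNReal_le_toENNReal) u
    continuous_toENNReal.continuousAt

theorem coe_ennreal_liminf (u : ℕ → ℝ≥0∞) :
    ((liminf u atTop : ℝ≥0∞) : EReal) = liminf (fun n => (u n : EReal)) atTop :=
  Monotone.map_liminf_of_continuousAt (fun _ _ => coe_ennreal_le_coe_ennreal_iff.mpr) u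
    continuous_coe_ennreal_ereal.continuousAt

end EReal

section erealIntegral

variable {X : Type*} [MeasurableSpace X] (μ : Measure X) [IsFiniteMeasure μ]

theorem erealIntegral_eq_lintegral_sub {g : X → EReal} (hg : Measurable g) {c : ℝ}
    (hc : c ≤ 0) (hgc : ∀ x, (c : EReal) ≤ g x) :
    erealIntegral μ g = ((∫⁻ x, (g x - c).toENNReal ∂μ : ℝ≥0∞) : EReal)
      - (ENNReal.ofReal (-c) * μ Set.univ : ℝ≥0∞) := by
  simp only [erealIntegral, erealToENNReal_eq_toENNReal]
  have hneg : ∫⁻ x, (-g x).toENNReal ∂μ ≤ ENNReal.ofReal (-c) * μ Set.univ := by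
    rw [← lintegral_const]
    refine lintegral_mono fun x => ?_
    simpa using EReal.toENNReal_le_toENNReal (EReal.neg_le_neg_iff.mpr (hgc x))
  have hk : ENNReal.ofReal (-c) * μ Set.univ ≠ ∞ := by finiteness
  refine EReal.coe_ennreal_sub_eq_of_add_eq (ne_top_of_le_ne_top hk hneg) hk ?_
  have hmeas : Measurable fun x => (g x - c).toENNReal :=
    EReal.continuous_toENNReal.measurable.comp (hg.sub_const _)
  rw [← lintegral_add_left hmeas, ← lintegral_const, ← lintegral_add_right _ measurable_const]
  exact lintegral_congr fun x => EReal.toENNReal_sub_add_toENNReal_neg hc (hgc x)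

theorem erealIntegral_le_liminf {g : ℕ → X → EReal} {g₀ : X → EReal}
    (hg : ∀ n, Measurable (g n)) (hg₀ : Measurable g₀) (c : ℝ)
    (hgc : ∀ n x, (c : EReal) ≤ g n x) (hg₀c : ∀ x, (c : EReal) ≤ g₀ x)
    (hle : ∀ x, g₀ x ≤ liminf (fun n => g n x) atTop) :
    erealIntegral μ g₀ ≤ liminf (fun n => erealIntegral μ (g n)) atTop := by
  wlog hc : c ≤ 0 generalizing c
  · exact this 0 (fun n x => (hgc n x).trans' (mod_cast (not_le.mp hc).le))
      (fun x => (hg₀c x).trans' (mod_cast (not_le.mp hc).le)) le_rfl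
  have hfatou : ∫⁻ x, (g₀ x - c).toENNReal ∂μ
      ≤ liminf (fun n => ∫⁻ x, (g n x - c).toENNReal ∂μ) atTop :=
    calc ∫⁻ x, (g₀ x - c).toENNReal ∂μ
        ≤ ∫⁻ x, liminf (fun n => (g n x - c).toENNReal) atTop ∂μ := by
          refine lintegral_mono fun x => ?_
          rw [← EReal.toENNReal_liminf]
          exact EReal.toENNReal_le_toENNReal
            ((EReal.sub_le_sub (hle x) le_rfl).trans (EReal.liminf_sub_const_le _ _))
      _ ≤ _ := lintegral_liminf_le fun n =>
          EReal.continuous_toENNReal.measurable.comp ((hg n).sub_const _)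
  simp_rw [erealIntegral_eq_lintegral_sub μ hg₀ hc hg₀c,
    erealIntegral_eq_lintegral_sub μ (hg _) hc (hgc _)]
  refine (EReal.sub_le_sub (EReal.coe_ennreal_le_coe_ennreal_iff.mpr hfatou) le_rfl).trans ?_
  rw [EReal.coe_ennreal_liminf]
  exact EReal.liminf_sub_const_le _ _

end erealIntegral

section supAffine

variable {E : Type*} [NormedAddCommGroup E] [InnerProductSpace ℝ E]

/-- The paper's `F(g)(v) = sup_x (⟨v, x⟩ + g x)`, i.e. the convex conjugate of `-g`. -/
noncomputable def supAffine (g : E → ℝ) (v : E) : EReal :=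
  ⨆ x, ((inner ℝ v x + g x : ℝ) : EReal)

theorem lowerSemicontinuous_supAffine (g : E → ℝ) : LowerSemicontinuous (supAffine g) :=
  lowerSemicontinuous_iSup fun _ => (continuous_coe_real_ereal.comp
    ((continuous_id.inner continuous_const).add continuous_const)).lowerSemicontinuous

theorem measurable_supAffine [MeasurableSpace E] [OpensMeasurableSpace E] (g : E → ℝ) :
    Measurable (supAffine g) :=
  (lowerSemicontinuous_supAffine g).measurable

theorem coe_apply_zero_le_supAffine (g : E → ℝ) (v : E) :
    ((g 0 : ℝ) : EReal) ≤ supAffine g v :=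
  le_iSup_of_le 0 (by simp)

theorem supAffine_le_liminf {ι : Type*} {l : Filter ι} [l.NeBot] {f : ι → E → ℝ}
    {g : E → ℝ} (hf : ∀ x, Tendsto (fun n => f n x) l (nhds (g x))) (v : E) :
    supAffine g v ≤ liminf (fun n => supAffine (f n) v) l :=
  iSup_le fun x => by
    have hx : Tendsto (fun n => ((inner ℝ v x + f n x : ℝ) : EReal)) l
        (nhds ((inner ℝ v x + g x : ℝ) : EReal)) :=
      (continuous_coe_real_ereal.tendsto _).comp ((hf x).const_add _)
    rw [← hx.liminf_eq]
    exact liminf_le_liminf (Eventually.of_forall fun n => le_iSup_of_le x le_rfl)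

end supAffine

theorem stmt_4_general (d : ℕ) (μ : Measure (EuclideanSpace ℝ (Fin d)))
    [IsFiniteMeasure μ]
    (f : ℕ → EuclideanSpace ℝ (Fin d) → ℝ) (flim : EuclideanSpace ℝ (Fin d) → ℝ)
    (hconv : ∀ x, Filter.Tendsto (fun n => f n x) Filter.atTop (nhds (flim x)))
    (hbdd : BddBelow (Set.range fun n => f n 0)) :
    erealIntegral μ (fun v => ⨆ x : EuclideanSpace ℝ (Fin d),
        (((inner ℝ v x : ℝ) + flim x : ℝ) : EReal))
      ≤ Filter.liminf
          (fun n => erealIntegral μ (fun v => ⨆ x : EuclideanSpace ℝ (Fin d),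
            (((inner ℝ v x : ℝ) + f n x : ℝ) : EReal)))
          Filter.atTop := by
  obtain ⟨c, hc⟩ := hbdd
  have hcf : ∀ n, c ≤ f n 0 := fun n => hc ⟨n, rfl⟩
  have hcflim : c ≤ flim 0 := ge_of_tendsto (hconv 0) (Eventually.of_forall hcf)
  exact erealIntegral_le_liminf μ (fun n => measurable_supAffine (f n))
    (measurable_supAffine flim) c
    (fun n v => (EReal.coe_le_coe_iff.mpr (hcf n)).trans (coe_apply_zero_le_supAffine _ v))
    (fun v => (EReal.coe_le_coe_iff.mpr hcflim).trans (coe_apply_zero_le_supAffine _ v))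
    (supAffine_le_liminf hconv)

/-- Fatou-type step in Lemma 3.2 of the paper: for a finite Borel measure
`μ` on `ℝ^d` and functions `f_n → f` pointwise with `inf_n f_n(0) > −∞`, setting
`F(g)(v) := sup_x (⟨v,x⟩ + g(x))`, one has
`liminf_n ∫ F(f_n) dμ ≥ ∫ F(f) dμ` in the extended reals. -/
theorem stmt_4 (d : ℕ) (hd : 1 ≤ d) (μ : Measure (EuclideanSpace ℝ (Fin d)))
    [IsFiniteMeasure μ]
    (f : ℕ → EuclideanSpace ℝ (Fin d) → ℝ) (flim : EuclideanSpace ℝ (Fin d) → ℝ)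
    (hconv : ∀ x, Filter.Tendsto (fun n => f n x) Filter.atTop (nhds (flim x)))
    (hbdd : BddBelow (Set.range fun n => f n 0)) :
    erealIntegral μ (fun v => ⨆ x : EuclideanSpace ℝ (Fin d),
        (((inner ℝ v x : ℝ) + flim x : ℝ) : EReal))
      ≤ Filter.liminf
          (fun n => erealIntegral μ (fun v => ⨆ x : EuclideanSpace ℝ (Fin d),
            (((inner ℝ v x : ℝ) + f n x : ℝ) : EReal)))
          Filter.atTop :=
  stmt_4_general d μ f flim hconv hbdd
end

section
/- Let μ be a compactly supported Borel probability measure on ℝ^d and let f : ℝ^d → ℝ be Lipschitz. Then, with both sides valued in the extended reals, sup_{ν ∈ P₁(ℝ^d)} ( ∫ f dν + W̄(ν, μ) ) = ∫ (−f)*(v) dμ(v), where (−f)*(v) := sup_{x∈ℝ^d} (⟨v,x⟩ + f(x)). -/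
open MeasureTheory

/-- `π` is a coupling of `μ` and `ν`: a probability measure on the product whose
marginals are `μ` and `ν`. -/
def IsCoupling {X : Type*} [MeasurableSpace X]
    (π : Measure (X × X)) (μ ν : Measure X) : Prop :=
  IsProbabilityMeasure π ∧ π.map Prod.fst = μ ∧ π.map Prod.snd = ν

/-- The integral of a real-valued function exists in the extended reals: the lower integral of
its positive part or that of its negative part is finite. -/
def HasEIntegral {X : Type*} [MeasurableSpace X] (π : Measure X) (f : X → ℝ) : Prop :=
  (∫⁻ p, ENNReal.ofReal (f p) ∂π) ≠ ⊤ ∨ (∫⁻ p, ENNReal.ofReal (-(f p)) ∂π) ≠ ⊤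

/-- The integral of a real-valued function in the extended reals. -/
noncomputable def eIntegral {X : Type*} [MeasurableSpace X] (π : Measure X) (f : X → ℝ) :
    EReal :=
  ((∫⁻ p, ENNReal.ofReal (f p) ∂π : ENNReal) : EReal)
    - ((∫⁻ p, ENNReal.ofReal (-(f p)) ∂π : ENNReal) : EReal)

/-- The maximizing Wasserstein-type cost `W̄(ν,μ) = sup_π ∫ ⟨x,v⟩ dπ`, valued in the extended
reals; the supremum runs over couplings of `ν` and `μ` for which the integral exists. -/
noncomputable def Wupp {d : ℕ} (ν μ : Measure (EuclideanSpace ℝ (Fin d))) : EReal :=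
  sSup {c : EReal | ∃ π : Measure (EuclideanSpace ℝ (Fin d) × EuclideanSpace ℝ (Fin d)),
    IsCoupling π ν μ ∧ HasEIntegral π (fun p => (inner ℝ p.1 p.2 : ℝ)) ∧
    c = eIntegral π (fun p => (inner ℝ p.1 p.2 : ℝ))}

/-!
For every coupling `π` of `ν` and `μ` we have `f x + ⟪x, v⟫ ≤ (-f)^*(v)` pointwise, so
integrating against `π` bounds `∫ f dν + ∫ ⟪x, v⟫ dπ` by `∫ (-f)^* dμ`.

Conversely, along a dense sequence `(x k)` the function `(-f)^*` is the increasing limit of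
`v ↦ max_{k ≤ n} (⟪v, x k⟫ + f (x k))`, and a greedy running argmax `s n` realises this maximum
measurably and with finitely many values. The measure `ν = (s n)_# μ` lies in `P₁` and the
coupling `(s n, id)_# μ` shows that `∫ f dν + W̄(ν, μ)` is at least the integral of the `n`-th
approximant; monotone convergence in the extended reals finishes the argument.
-/
open Filter Topology
open scoped InnerProductSpace

section ERealIntegral

variable {X : Type*} [MeasurableSpace X] {μ : Measure X}

lemma eIntegral_eq_erealIntegral (c : X → ℝ) :
    eIntegral μ c = erealIntegral μ fun x => (c x : EReal) := rfl

lemma erealIntegral_mono {F G : X → EReal} (hFG : ∀ x, F x ≤ G x) :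
    erealIntegral μ F ≤ erealIntegral μ G := by
  refine EReal.sub_le_sub ?_ ?_ <;> refine EReal.coe_ennreal_le_coe_ennreal_iff.2
    (lintegral_mono fun x => EReal.toENNReal_le_toENNReal ?_)
  exacts [hFG x, EReal.neg_le_neg_iff.2 (hFG x)]

lemma erealIntegral_map {Y : Type*} [MeasurableSpace Y] {φ : X → Y} (hφ : Measurable φ)
    {G : Y → EReal} (hG : Measurable G) :
    erealIntegral (μ.map φ) G = erealIntegral μ (G ∘ φ) := by
  have h := EReal.continuous_toENNReal.measurable
  simp only [erealIntegral]
  rw [lintegral_map (f := fun y => erealToENNReal (G y)) (h.comp hG) hφ,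
    lintegral_map (f := fun y => erealToENNReal (-G y)) (h.comp hG.neg) hφ]
  rfl

lemma MeasureTheory.Integrable.lintegral_ofReal_ne_top {c : X → ℝ} (hc : Integrable c μ) :
    ∫⁻ x, ENNReal.ofReal (c x) ∂μ ≠ ⊤ :=
  ((lintegral_ofReal_le_lintegral_enorm c).trans_lt hc.2).ne

lemma eIntegral_of_integrable {c : X → ℝ} (hc : Integrable c μ) :
    eIntegral μ c = ((∫ x, c x ∂μ : ℝ) : EReal) := by
  have hneg : ∫⁻ x, ENNReal.ofReal (-c x) ∂μ ≠ ⊤ := hc.neg.lintegral_ofReal_ne_top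
  rw [integral_eq_lintegral_pos_part_sub_lintegral_neg_part hc, EReal.coe_sub,
    EReal.coe_ennreal_toReal hc.lintegral_ofReal_ne_top, EReal.coe_ennreal_toReal hneg]
  rfl

lemma integrable_of_lintegral_ofReal_ne_top {c : X → ℝ} (hc : AEStronglyMeasurable c μ)
    (hpos : ∫⁻ x, ENNReal.ofReal (c x) ∂μ ≠ ⊤)
    (hneg : ∫⁻ x, ENNReal.ofReal (-c x) ∂μ ≠ ⊤) :
    Integrable c μ := by
  have henorm (r : ℝ) : ‖r‖ₑ = ENNReal.ofReal r + ENNReal.ofReal (-r) := by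
    rcases le_total 0 r with hr | hr
    · simp [Real.enorm_eq_ofReal hr, ENNReal.ofReal_of_nonpos (neg_nonpos.2 hr)]
    · simp [← enorm_neg r, Real.enorm_eq_ofReal (neg_nonneg.2 hr), ENNReal.ofReal_of_nonpos hr]
  refine ⟨hc, ?_⟩
  rw [HasFiniteIntegral, lintegral_congr fun x => henorm (c x),
    lintegral_add_left' hc.aemeasurable.ennreal_ofReal]
  exact ENNReal.add_lt_top.2 ⟨hpos.lt_top, hneg.lt_top⟩

lemma coe_integral_add_eIntegral_le {h c : X → ℝ} (hh : Integrable h μ)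
    (hc : AEStronglyMeasurable c μ) :
    ((∫ x, h x ∂μ : ℝ) : EReal) + eIntegral μ c ≤ eIntegral μ fun x => h x + c x := by
  by_cases hneg : ∫⁻ x, ENNReal.ofReal (-c x) ∂μ = ⊤
  -- in `EReal`, `x - ⊤ = ⊥` for every `x`, so the left side is `⊥`
  · simp [eIntegral, hneg]
  have hhneg : ∫⁻ x, ENNReal.ofReal (-h x) ∂μ ≠ ⊤ := hh.neg.lintegral_ofReal_ne_top
  have hhneg_meas : AEMeasurable (fun x => ENNReal.ofReal (-h x)) μ :=
    hh.aemeasurable.neg.ennreal_ofReal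
  by_cases hpos : ∫⁻ x, ENNReal.ofReal (c x) ∂μ = ⊤
  · have hpos' : ∫⁻ x, ENNReal.ofReal (h x + c x) ∂μ = ⊤ := by
      have : ∫⁻ x, ENNReal.ofReal (c x) ∂μ ≤
          ∫⁻ x, ENNReal.ofReal (h x + c x) ∂μ + ∫⁻ x, ENNReal.ofReal (-h x) ∂μ := by
        rw [← lintegral_add_right' _ hhneg_meas]
        exact lintegral_mono fun x =>
          (ENNReal.ofReal_le_ofReal (by linarith)).trans ENNReal.ofReal_add_le
      rw [hpos, top_le_iff, ENNReal.add_eq_top] at this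
      exact this.resolve_right hhneg
    have hneg' : ∫⁻ x, ENNReal.ofReal (-(h x + c x)) ∂μ ≠ ⊤ := by
      refine ne_top_of_le_ne_top (ENNReal.add_ne_top.2 ⟨hhneg, hneg⟩)
        ((lintegral_mono fun x => ?_).trans (lintegral_add_left' hhneg_meas _).le)
      exact (ENNReal.ofReal_le_ofReal (by linarith)).trans ENNReal.ofReal_add_le
    have htop : eIntegral μ (fun x => h x + c x) = ⊤ := by
      rw [eIntegral, hpos', EReal.coe_ennreal_top, EReal.top_sub (by simpa using hneg')]
    exact htop ▸ le_top
  have hcint := integrable_of_lintegral_ofReal_ne_top hc hpos hneg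
  rw [eIntegral_of_integrable hcint, ← EReal.coe_add, ← integral_add hh hcint]
  exact (eIntegral_of_integrable (hh.add hcint)).ge

lemma tendsto_coe_integral_erealIntegral_iSup {G : ℕ → X → ℝ}
    (hG : ∀ n, Integrable (G n) μ)
    (hmono : ∀ x, Monotone fun n => G n x) :
    Tendsto (fun n => ((∫ x, G n x ∂μ : ℝ) : EReal)) atTop
      (𝓝 (erealIntegral μ fun x => ⨆ n, (G n x : EReal))) := by
  set m := fun n => ∫⁻ x, ENNReal.ofReal (G n x) ∂μ
  set q := fun n => ∫⁻ x, ENNReal.ofReal (-G n x) ∂μ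
  have hpos : ∫⁻ x, erealToENNReal (⨆ n, (G n x : EReal)) ∂μ = ⨆ n, m n := by
    rw [← lintegral_iSup' (fun n => (hG n).aemeasurable.ennreal_ofReal)
      (ae_of_all _ fun x => ENNReal.ofReal_mono.comp (hmono x))]
    refine lintegral_congr fun x => ?_
    exact Monotone.map_iSup_of_continuousAt EReal.continuous_toENNReal.continuousAt
      (fun _ _ => EReal.toENNReal_le_toENNReal) EReal.toENNReal_bot
  have hneg : ∫⁻ x, erealToENNReal (-⨆ n, (G n x : EReal)) ∂μ = ⨅ n, q n := by
    rw [← lintegral_iInf' (f := fun n x => ENNReal.ofReal (-G n x))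
      (fun n => (hG n).aemeasurable.neg.ennreal_ofReal)
      (ae_of_all _ fun x _ _ hij => ENNReal.ofReal_le_ofReal (neg_le_neg (hmono x hij)))
      ((hG 0).neg.lintegral_ofReal_ne_top)]
    refine lintegral_congr fun x => ?_
    exact Antitone.map_iSup_of_continuousAt (f := fun y : EReal => (-y).toENNReal)
      (EReal.continuous_toENNReal.comp continuous_neg).continuousAt
      (fun _ _ h => EReal.toENNReal_le_toENNReal (EReal.neg_le_neg_iff.2 h)) (by simp)
  have hm : Tendsto m atTop (𝓝 (⨆ n, m n)) := tendsto_atTop_iSup fun i j hij =>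
    lintegral_mono fun x => ENNReal.ofReal_le_ofReal (hmono x hij)
  have hq : Tendsto q atTop (𝓝 (⨅ n, q n)) := tendsto_atTop_iInf fun i j hij =>
    lintegral_mono fun x => ENNReal.ofReal_le_ofReal (neg_le_neg (hmono x hij))
  simp_rw [← eIntegral_of_integrable (hG _)]
  rw [erealIntegral, hpos, hneg]
  have hq_top : (⨅ n, q n) ≠ ⊤ :=
    ne_top_of_le_ne_top (hG 0).neg.lintegral_ofReal_ne_top (iInf_le q 0)
  have hcoe := continuous_coe_ennreal_ereal.tendsto
  exact (EReal.continuousAt_add (.inr (by simpa using hq_top))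
    (.inl (EReal.coe_ennreal_ne_bot _))).tendsto.comp
    (((hcoe _).comp hm).prodMk_nhds ((continuous_neg.tendsto _).comp ((hcoe _).comp hq)))

end ERealIntegral

section RunningArgmax

variable {V E : Type*} (φ : V → E → ℝ) (x : ℕ → E)

noncomputable def runningArgmax : ℕ → V → E
  | 0 => fun _ => x 0
  | n + 1 => fun v =>
      if φ v (runningArgmax n v) < φ v (x (n + 1)) then x (n + 1) else runningArgmax n v

lemma runningArgmax_mem_image (n : ℕ) (v : V) : runningArgmax φ x n v ∈ x '' Set.Iic n := by
  induction n with
  | zero => exact ⟨0, Set.mem_Iic.2 le_rfl, rfl⟩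
  | succ n ih =>
    simp only [runningArgmax]
    split_ifs
    · exact ⟨n + 1, Set.mem_Iic.2 le_rfl, rfl⟩
    · exact Set.image_mono (Set.Iic_subset_Iic.2 n.le_succ) ih

lemma monotone_runningArgmax (v : V) : Monotone fun n => φ v (runningArgmax φ x n v) := by
  refine monotone_nat_of_le_succ fun n => ?_
  simp only [runningArgmax]
  split_ifs with h
  exacts [h.le, le_rfl]

lemma le_runningArgmax {k n : ℕ} (hkn : k ≤ n) (v : V) :
    φ v (x k) ≤ φ v (runningArgmax φ x n v) := by
  refine le_trans ?_ (monotone_runningArgmax φ x v hkn)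
  cases k with
  | zero => exact le_rfl
  | succ k =>
    simp only [runningArgmax]
    split_ifs with h
    exacts [le_rfl, not_lt.1 h]

lemma measurable_runningArgmax [MeasurableSpace V] [MeasurableSpace E]
    (hφ : Measurable (Function.uncurry φ)) (n : ℕ) : Measurable (runningArgmax φ x n) := by
  induction n with
  | zero => exact measurable_const
  | succ n ih =>
    exact Measurable.ite (measurableSet_lt (hφ.comp (measurable_id.prodMk ih))
      (hφ.comp (measurable_id.prodMk measurable_const))) measurable_const ih

lemma iSup_runningArgmax [TopologicalSpace E] (hx : DenseRange x) (v : V)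
    (hφ : Continuous (φ v)) :
    ⨆ n, (φ v (runningArgmax φ x n v) : EReal) = ⨆ y, (φ v y : EReal) := by
  refine le_antisymm (iSup_mono' fun n => ⟨_, le_rfl⟩) ?_
  rw [← hx.ciSup' (f := fun y => (φ v y : EReal)) (continuous_coe_real_ereal.comp hφ),
    iSup_range' (fun y => (φ v y : EReal)) x]
  exact iSup_mono fun k => EReal.coe_le_coe_iff.2 (le_runningArgmax φ x le_rfl v)

end RunningArgmax

section FirstMoment

variable {E : Type*} [NormedAddCommGroup E] [MeasurableSpace E] [OpensMeasurableSpace E]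
  {μ : Measure E}

lemma integrable_norm_of_isCompact_of_measure_compl_eq_zero [IsFiniteMeasure μ] {K : Set E}
    (hK : IsCompact K) (hμK : μ Kᶜ = 0) : Integrable (‖·‖) μ := by
  rw [← Measure.restrict_eq_self_of_ae_mem (ae_iff.2 hμK)]
  exact continuous_norm.continuousOn.integrableOn_compact hK

lemma LipschitzWith.integrable_of_integrable_norm [IsFiniteMeasure μ] {f : E → ℝ} {K : NNReal}
    (hf : LipschitzWith K f) (hμ : Integrable (‖·‖) μ) : Integrable f μ := by
  refine ((integrable_const ‖f 0‖).add (hμ.const_mul K)).mono'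
    hf.continuous.aestronglyMeasurable (ae_of_all _ fun y => ?_)
  calc ‖f y‖ ≤ ‖f 0‖ + ‖f y - f 0‖ := norm_le_norm_add_norm_sub' _ _
    _ ≤ ‖f 0‖ + K * ‖y‖ := by
      gcongr
      simpa [dist_eq_norm] using hf.dist_le_mul y 0

lemma integrable_norm_map_of_norm_le [IsFiniteMeasure μ] {s : E → E} (hs : AEMeasurable s μ)
    {C : ℝ} (hC : ∀ v, ‖s v‖ ≤ C) : Integrable (‖·‖) (μ.map s) :=
  (integrable_map_measure continuous_norm.aestronglyMeasurable hs).2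
    (Integrable.of_bound hs.norm.aestronglyMeasurable C (ae_of_all _ fun v => by simpa using hC v))

lemma LipschitzWith.integrable_comp_of_norm_le [IsFiniteMeasure μ] {f : E → ℝ} {K : NNReal}
    (hf : LipschitzWith K f) {s : E → E} (hs : AEMeasurable s μ) {C : ℝ}
    (hC : ∀ v, ‖s v‖ ≤ C) :
    Integrable (fun v => f (s v)) μ :=
  (integrable_map_measure hf.continuous.aestronglyMeasurable hs).1
    (hf.integrable_of_integrable_norm (integrable_norm_map_of_norm_le hs hC))

end FirstMoment

lemma integrable_inner_of_norm_le {F : Type*} [NormedAddCommGroup F] [InnerProductSpace ℝ F]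
    [MeasurableSpace F] [BorelSpace F] [SecondCountableTopology F]
    {μ : Measure F} (hμ : Integrable (‖·‖) μ) {s : F → F} (hs : AEStronglyMeasurable s μ)
    {C : ℝ} (hC : ∀ v, ‖s v‖ ≤ C) : Integrable (fun v => ⟪s v, v⟫_ℝ) μ :=
  (hμ.const_mul C).mono' (hs.inner aestronglyMeasurable_id) (ae_of_all _ fun v =>
    (norm_inner_le_norm _ _).trans (mul_le_mul_of_nonneg_right (hC v) (norm_nonneg _)))

section Wupp

variable {d : ℕ} {ν μ : Measure (EuclideanSpace ℝ (Fin d))}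

lemma coe_integral_add_Wupp_le {f : EuclideanSpace ℝ (Fin d) → ℝ} (hf : Integrable f ν)
    {g : EuclideanSpace ℝ (Fin d) → EReal} (hg : Measurable g)
    (hfg : ∀ x v, ((f x + ⟪x, v⟫_ℝ : ℝ) : EReal) ≤ g v) :
    ((∫ x, f x ∂ν : ℝ) : EReal) + Wupp ν μ ≤ erealIntegral μ g := by
  refine EReal.add_le_of_forall_lt fun a ha b hb => ?_
  obtain ⟨_, ⟨π, ⟨-, hπν, hπμ⟩, -, rfl⟩, hbπ⟩ := lt_sSup_iff.1 hb
  subst hπν hπμ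
  have hfπ : Integrable (fun p => f p.1) π :=
    (integrable_map_measure hf.1 measurable_fst.aemeasurable).1 hf
  calc a + b
      ≤ ((∫ x, f x ∂π.map Prod.fst : ℝ) : EReal) + eIntegral π fun p => ⟪p.1, p.2⟫_ℝ :=
        add_le_add ha.le hbπ.le
    _ = ((∫ p, f p.1 ∂π : ℝ) : EReal) + eIntegral π fun p => ⟪p.1, p.2⟫_ℝ := by
        rw [integral_map measurable_fst.aemeasurable hf.1]
    _ ≤ eIntegral π fun p => f p.1 + ⟪p.1, p.2⟫_ℝ :=
        coe_integral_add_eIntegral_le hfπ continuous_inner.aestronglyMeasurable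
    _ ≤ erealIntegral π (g ∘ Prod.snd) :=
        (eIntegral_eq_erealIntegral _).trans_le (erealIntegral_mono fun p => hfg p.1 p.2)
    _ = erealIntegral (π.map Prod.snd) g := (erealIntegral_map measurable_snd hg).symm

lemma coe_integral_inner_le_Wupp_map [IsProbabilityMeasure μ] (hμ : Integrable (‖·‖) μ)
    {s : EuclideanSpace ℝ (Fin d) → EuclideanSpace ℝ (Fin d)} (hs : Measurable s) {C : ℝ}
    (hC : ∀ v, ‖s v‖ ≤ C) :
    ((∫ v, ⟪s v, v⟫_ℝ ∂μ : ℝ) : EReal) ≤ Wupp (μ.map s) μ := by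
  have hpair : Measurable fun v => (s v, v) := hs.prodMk measurable_id
  have hinner : Integrable (fun p => ⟪p.1, p.2⟫_ℝ) (μ.map fun v => (s v, v)) :=
    (integrable_map_measure continuous_inner.aestronglyMeasurable hpair.aemeasurable).2
      (integrable_inner_of_norm_le hμ hs.aestronglyMeasurable hC)
  have hcoupling : IsCoupling (μ.map fun v => (s v, v)) (μ.map s) μ := by
    refine ⟨Measure.isProbabilityMeasure_map hpair.aemeasurable, ?_, ?_⟩
    · rw [Measure.map_map measurable_fst hpair]; rfl
    · rw [Measure.map_map measurable_snd hpair]; exact Measure.map_id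
  refine le_sSup ⟨_, hcoupling, Or.inl hinner.lintegral_ofReal_ne_top, ?_⟩
  rw [eIntegral_of_integrable hinner,
    integral_map hpair.aemeasurable continuous_inner.aestronglyMeasurable]

lemma coe_integral_comp_add_inner_le [IsProbabilityMeasure μ] (hμ : Integrable (‖·‖) μ)
    {f : EuclideanSpace ℝ (Fin d) → ℝ} {K : NNReal} (hf : LipschitzWith K f)
    {s : EuclideanSpace ℝ (Fin d) → EuclideanSpace ℝ (Fin d)} (hs : Measurable s) {C : ℝ}
    (hC : ∀ v, ‖s v‖ ≤ C) :
    ((∫ v, f (s v) + ⟪s v, v⟫_ℝ ∂μ : ℝ) : EReal)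
      ≤ ((∫ y, f y ∂μ.map s : ℝ) : EReal) + Wupp (μ.map s) μ := by
  rw [integral_add (hf.integrable_comp_of_norm_le hs.aemeasurable hC)
    (integrable_inner_of_norm_le hμ hs.aestronglyMeasurable hC), EReal.coe_add,
    integral_map hs.aemeasurable hf.continuous.aestronglyMeasurable]
  exact add_le_add_right (coe_integral_inner_le_Wupp_map hμ hs hC) _

end Wupp

theorem stmt_6_general (d : ℕ) (μ : Measure (EuclideanSpace ℝ (Fin d)))
    [IsProbabilityMeasure μ]
    (hsupp : ∃ K : Set (EuclideanSpace ℝ (Fin d)), IsCompact K ∧ μ Kᶜ = 0)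
    (f : EuclideanSpace ℝ (Fin d) → ℝ) (K : NNReal) (hf : LipschitzWith K f) :
    sSup {c : EReal | ∃ ν : Measure (EuclideanSpace ℝ (Fin d)),
        IsProbabilityMeasure ν ∧ Integrable (fun x => ‖x‖) ν ∧
        c = ((∫ x, f x ∂ν : ℝ) : EReal) + Wupp ν μ}
      = erealIntegral μ (fun v => ⨆ x : EuclideanSpace ℝ (Fin d),
          (((inner ℝ v x : ℝ) + f x : ℝ) : EReal)) := by
  obtain ⟨S, hS, hμS⟩ := hsupp
  have hμ := integrable_norm_of_isCompact_of_measure_compl_eq_zero hS hμS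
  set φ : EuclideanSpace ℝ (Fin d) → EuclideanSpace ℝ (Fin d) → ℝ :=
    fun v y => f y + ⟪y, v⟫_ℝ
  have hφ : Continuous (Function.uncurry φ) :=
    (hf.continuous.comp continuous_snd).add (continuous_snd.inner continuous_fst)
  have hφv (v) : Continuous (φ v) := hφ.comp (continuous_const.prodMk continuous_id)
  have hg : (fun v => ⨆ x, (((inner ℝ v x : ℝ) + f x : ℝ) : EReal)) =
      fun v => ⨆ y, (φ v y : EReal) := by
    simp only [φ, real_inner_comm, add_comm]
  rw [hg]
  apply le_antisymm
  · refine sSup_le ?_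
    rintro _ ⟨ν, _, hν, rfl⟩
    exact coe_integral_add_Wupp_le (hf.integrable_of_integrable_norm hν)
      (lowerSemicontinuous_iSup fun y => (continuous_coe_real_ereal.comp
        (hφ.comp (continuous_id.prodMk continuous_const))).lowerSemicontinuous).measurable
      fun x v => le_iSup (fun y => (φ v y : EReal)) x
  · obtain ⟨x, hx⟩ := TopologicalSpace.exists_dense_seq (EuclideanSpace ℝ (Fin d))
    set s := runningArgmax φ x
    have hs (n) : Measurable (s n) := measurable_runningArgmax φ x hφ.measurable n
    have hbdd (n) : ∃ C, ∀ v, ‖s n v‖ ≤ C :=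
      (((Set.finite_Iic n).image x).isBounded.exists_norm_le).imp fun C hC v =>
        hC _ (runningArgmax_mem_image φ x n v)
    choose C hC using hbdd
    have hint (n) : Integrable (fun v => φ v (s n v)) μ :=
      (hf.integrable_comp_of_norm_le (hs n).aemeasurable (hC n)).add
        (integrable_inner_of_norm_le hμ (hs n).aestronglyMeasurable (hC n))
    simp_rw [← iSup_runningArgmax φ x hx _ (hφv _)]
    refine le_of_tendsto' (tendsto_coe_integral_erealIntegral_iSup hint
      fun v => monotone_runningArgmax φ x v) fun n => ?_
    exact le_sSup_of_le ⟨μ.map (s n), Measure.isProbabilityMeasure_map (hs n).aemeasurable,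
      integrable_norm_map_of_norm_le (hs n).aemeasurable (hC n), rfl⟩
      (coe_integral_comp_add_inner_le hμ hf (hs n) (hC n))

/-- lemma of Section 3.2 of the paper: for a compactly supported Borel
probability measure `μ` on `ℝ^d` and Lipschitz `f`,
`sup_{ν ∈ P₁} ( ∫ f dν + W̄(ν,μ) ) = ∫ (−f)* dμ`, where `(−f)*(v) = sup_x (⟨v,x⟩ + f(x))`. -/
theorem stmt_6 (d : ℕ) (hd : 1 ≤ d) (μ : Measure (EuclideanSpace ℝ (Fin d)))
    [IsProbabilityMeasure μ]
    (hsupp : ∃ K : Set (EuclideanSpace ℝ (Fin d)), IsCompact K ∧ μ Kᶜ = 0)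
    (f : EuclideanSpace ℝ (Fin d) → ℝ) (K : NNReal) (hf : LipschitzWith K f) :
    sSup {c : EReal | ∃ ν : Measure (EuclideanSpace ℝ (Fin d)),
        IsProbabilityMeasure ν ∧ Integrable (fun x => ‖x‖) ν ∧
        c = ((∫ x, f x ∂ν : ℝ) : EReal) + Wupp ν μ}
      = erealIntegral μ (fun v => ⨆ x : EuclideanSpace ℝ (Fin d),
          (((inner ℝ v x : ℝ) + f x : ℝ) : EReal)) :=
  stmt_6_general d μ hsupp f K hf
end
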